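/- Let P, Q, T be finite posets and ξ : P → Q an order homomorphism. Let Γ_{P,T}(ξ) be the set of homomorphisms ζ : P → T such that the partition G(ζ) equals G(ξ). Then the cardinality of Γ_{P,T}(ξ) equals the number of strict order homomorphisms from the poset (G(ξ), ≼) to T. -/

import Mathlib

/-- Zigzag connectivity within a subset `A`. -/
def ZigConn {α : Type*} [PartialOrder α] (A : Set α) (x y : α) : Prop :=
  Relation.ReflTransGen (fun a b => a ∈ A ∧ b ∈ A ∧ (a < b ∨ b < a)) x y

/-- The zigzag-connectivity component of `x` inside the pre-image `ξ⁻¹(ξ(x))`. -/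
def Gxi {P Q : Type*} [PartialOrder P] (ξ : P → Q) (x : P) : Set P :=
  {y | ZigConn (ξ ⁻¹' {ξ x}) x y}

/-- The partition `G(ξ)` of `P`, as a set of subsets. -/
def GPart {P Q : Type*} [PartialOrder P] (ξ : P → Q) : Set (Set P) :=
  {s | ∃ x : P, s = Gxi ξ x}

/-- The relation `≼₀` on `G(ξ)`. -/
def Prec0 {P Q : Type*} [PartialOrder P] (ξ : P → Q) (a b : GPart ξ) : Prop :=
  ∃ a' ∈ a.1, ∃ b' ∈ b.1, a' ≤ b'

/-- The transitive hull of a relation. -/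
def TransHull {X : Type*} (R : X → X → Prop) (x y : X) : Prop :=
  ∀ S : X → X → Prop, Transitive S → (∀ a b, R a b → S a b) → S x y

/-- The relation `≼` on `G(ξ)`: the transitive hull of `≼₀`. -/
def Prec {P Q : Type*} [PartialOrder P] (ξ : P → Q) : GPart ξ → GPart ξ → Prop :=
  TransHull (Prec0 ξ)

/-! A homomorphism `ζ` with `G(ζ) = G(ξ)` is constant on the blocks of `G(ξ)`, so it factors
uniquely as `σ ∘ π_ξ`. Comparable elements of different blocks must get different values
under `ζ` (otherwise they would lie in one block of `G(ζ)`), which makes `σ` strict on `≼₀` and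
hence on its transitive hull `≼`. Conversely, for `σ` strict on `≼`, the map `σ ∘ π_ξ` is
monotone and identifies comparable elements exactly when they lie in the same block of `G(ξ)`,
so its zigzag components are those of `ξ`. -/

open Function

section Strict

variable {X T : Type*} [PartialOrder T]

theorem transHull_of_rel {R : X → X → Prop} {a b : X} (h : R a b) : TransHull R a b :=
  fun _ _ hRS => hRS a b h

theorem strict_transHull_iff {R : X → X → Prop} {σ : X → T} :
    (∀ a b, TransHull R a b → σ a ≤ σ b ∧ (a ≠ b → σ a < σ b)) ↔
      ∀ a b, R a b → a = b ∨ σ a < σ b := by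
  constructor
  · intro hσ a b hab
    obtain ⟨-, hlt⟩ := hσ a b (transHull_of_rel hab)
    exact or_iff_not_imp_left.2 hlt
  · intro hσ a b hab
    have htrans : Transitive fun a b => a = b ∨ σ a < σ b := by
      rintro a b c (rfl | hab) (rfl | hbc)
      exacts [.inl rfl, .inr hbc, .inr hab, .inr (hab.trans hbc)]
    rcases hab _ htrans hσ with rfl | hlt
    · exact ⟨le_rfl, fun h => absurd rfl h⟩
    · exact ⟨hlt.le, fun _ => hlt⟩

end Strict

namespace ZigConn

variable {α : Type*} [PartialOrder α] {A : Set α} {x y : α}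

theorem symm (h : ZigConn A x y) : ZigConn A y x := by
  refine (@Relation.ReflTransGen.stdSymm _ _ ⟨?_⟩).symm _ _ h
  rintro a b ⟨ha, hb, hab⟩
  exact ⟨hb, ha, hab.symm⟩

end ZigConn

section Components

variable {P Q T : Type*} [PartialOrder P] {ξ : P → Q} {x y : P}

theorem mem_Gxi_self (ξ : P → Q) (x : P) : x ∈ Gxi ξ x := Relation.ReflTransGen.refl

theorem apply_eq_of_mem_Gxi (h : y ∈ Gxi ξ x) : ξ y = ξ x := by
  induction h with
  | refl => rfl
  | tail _ step _ => exact step.2.1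

theorem Gxi_eq_of_mem (h : y ∈ Gxi ξ x) : Gxi ξ y = Gxi ξ x := by
  have hfiber : ξ ⁻¹' {ξ y} = ξ ⁻¹' {ξ x} := by rw [apply_eq_of_mem_Gxi h]
  ext z
  change ZigConn (ξ ⁻¹' {ξ y}) y z ↔ ZigConn (ξ ⁻¹' {ξ x}) x z
  rw [hfiber]
  exact ⟨h.trans, h.symm.trans⟩

theorem mem_Gxi_comm : y ∈ Gxi ξ x ↔ x ∈ Gxi ξ y :=
  ⟨fun h => Gxi_eq_of_mem h ▸ mem_Gxi_self ξ x, fun h => Gxi_eq_of_mem h ▸ mem_Gxi_self ξ y⟩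

theorem mem_Gxi_of_lt (hlt : x < y) (hxy : ξ x = ξ y) : y ∈ Gxi ξ x :=
  .single ⟨rfl, hxy.symm, .inl hlt⟩

theorem Gxi_subset_Gxi {ζ : P → T}
    (h : ∀ b c, b < c → ζ b = ζ c → c ∈ Gxi ξ b) : Gxi ζ x ⊆ Gxi ξ x := by
  intro y hy
  induction hy with
  | refl => exact mem_Gxi_self ξ x
  | @tail b c _ step ih =>
    obtain ⟨hb, hc, hbc⟩ := step
    have hζ : ζ b = ζ c := hb.trans hc.symm
    rw [← Gxi_eq_of_mem ih]
    rcases hbc with hlt | hlt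
    · exact h b c hlt hζ
    · exact mem_Gxi_comm.1 (h c b hlt hζ.symm)

theorem GPart_eq_GPart_iff {ζ : P → T} : GPart ζ = GPart ξ ↔ Gxi ζ = Gxi ξ := by
  constructor
  · intro hG
    funext x
    obtain ⟨w, hw⟩ : Gxi ξ x ∈ GPart ζ := hG ▸ ⟨x, rfl⟩
    rw [hw, Gxi_eq_of_mem (hw ▸ mem_Gxi_self ξ x)]
  · intro h
    simp only [GPart, h]

end Components

namespace GPart

variable {P Q T : Type*} [PartialOrder P] {ξ : P → Q} {x y : P}

/-- The quotient map `π_ξ : P → G(ξ)`. -/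
def proj (ξ : P → Q) (x : P) : GPart ξ := ⟨Gxi ξ x, x, rfl⟩

theorem proj_surjective (ξ : P → Q) : Surjective (proj ξ) := by
  rintro ⟨_, x, rfl⟩
  exact ⟨x, rfl⟩

theorem proj_eq_proj_iff : proj ξ x = proj ξ y ↔ y ∈ Gxi ξ x := by
  refine ⟨fun h => ?_, fun h => Subtype.ext (Gxi_eq_of_mem h).symm⟩
  rw [show Gxi ξ x = Gxi ξ y from congrArg Subtype.val h]
  exact mem_Gxi_self ξ y

theorem proj_eq_of_mem {a : GPart ξ} (h : y ∈ a.1) : proj ξ y = a := by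
  obtain ⟨x, rfl⟩ := proj_surjective ξ a
  exact Subtype.ext (Gxi_eq_of_mem h)

theorem prec0_proj_proj (h : x ≤ y) : Prec0 ξ (proj ξ x) (proj ξ y) :=
  ⟨x, mem_Gxi_self ξ x, y, mem_Gxi_self ξ y, h⟩

theorem apply_eq_of_proj_eq {ζ : P → T} (hG : Gxi ζ = Gxi ξ) (h : proj ξ x = proj ξ y) :
    ζ x = ζ y := by
  rw [proj_eq_proj_iff, ← hG] at h
  exact (apply_eq_of_mem_Gxi h).symm

variable [PartialOrder T] {σ : GPart ξ → T}

theorem strict_of_comp_proj {ζ : P → T} (hζ : Monotone ζ)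
    (hG : Gxi ζ = Gxi ξ) (hσ : σ ∘ proj ξ = ζ) :
    ∀ a b, Prec ξ a b → σ a ≤ σ b ∧ (a ≠ b → σ a < σ b) := by
  refine strict_transHull_iff.2 ?_
  rintro a b ⟨x, hx, y, hy, hxy⟩
  rw [← proj_eq_of_mem hx, ← proj_eq_of_mem hy, ← comp_apply (f := σ), ← comp_apply (f := σ), hσ]
  rcases hxy.lt_or_eq with hlt | rfl
  · rcases (hζ hlt.le).lt_or_eq with hζlt | hζeq
    · exact .inr hζlt
    · exact .inl (proj_eq_proj_iff.2 (hG ▸ mem_Gxi_of_lt hlt hζeq))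
  · exact .inl rfl

theorem monotone_comp_proj (hσ : ∀ a b, Prec ξ a b → σ a ≤ σ b ∧ (a ≠ b → σ a < σ b)) :
    Monotone (σ ∘ proj ξ) := fun _ _ hxy =>
  (hσ _ _ (transHull_of_rel (prec0_proj_proj hxy))).1

theorem Gxi_comp_proj (hσ : ∀ a b, Prec ξ a b → σ a ≤ σ b ∧ (a ≠ b → σ a < σ b)) :
    Gxi (σ ∘ proj ξ) = Gxi ξ := by
  have hstrict := strict_transHull_iff.1 hσ
  funext x
  refine (Gxi_subset_Gxi fun b c hbc heq => ?_).antisymm (Gxi_subset_Gxi fun b c hbc heq => ?_)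
  · rcases hstrict _ _ (prec0_proj_proj hbc.le) with hproj | hlt
    · exact proj_eq_proj_iff.1 hproj
    · exact absurd heq hlt.ne
  · have hproj : proj ξ b = proj ξ c := proj_eq_proj_iff.2 (mem_Gxi_of_lt hbc heq)
    exact mem_Gxi_of_lt hbc (congrArg σ hproj)

end GPart

theorem stmt_10_general {P Q T : Type} [PartialOrder P] [PartialOrder T]
    (ξ : P → Q) :
    Nat.card {ζ : P → T // Monotone ζ ∧ GPart ζ = GPart ξ} =
    Nat.card {σ : GPart ξ → T //
      ∀ a b : GPart ξ, Prec ξ a b → σ a ≤ σ b ∧ (a ≠ b → σ a < σ b)} := by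
  let F : {σ : GPart ξ → T // ∀ a b, Prec ξ a b → σ a ≤ σ b ∧ (a ≠ b → σ a < σ b)} →
      {ζ : P → T // Monotone ζ ∧ GPart ζ = GPart ξ} := fun σ =>
    ⟨σ.1 ∘ GPart.proj ξ, GPart.monotone_comp_proj σ.2,
      GPart_eq_GPart_iff.2 (GPart.Gxi_comp_proj σ.2)⟩
  have hinj : Injective F := fun σ τ h =>
    Subtype.ext ((GPart.proj_surjective ξ).injective_comp_right (congrArg Subtype.val h))
  have hsurj : Surjective F := by
    rintro ⟨ζ, hζ, hG⟩
    rw [GPart_eq_GPart_iff] at hG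
    have hfactor : (ζ ∘ surjInv (GPart.proj_surjective ξ)) ∘ GPart.proj ξ = ζ := funext fun x =>
      GPart.apply_eq_of_proj_eq hG (surjInv_eq (GPart.proj_surjective ξ) (GPart.proj ξ x))
    exact ⟨⟨_, GPart.strict_of_comp_proj hζ hG hfactor⟩, Subtype.ext hfactor⟩
  exact (Nat.card_congr (Equiv.ofBijective F ⟨hinj, hsurj⟩)).symm

theorem stmt_10 {P Q T : Type} [Fintype P] [PartialOrder P] [Fintype Q] [PartialOrder Q]
    [Fintype T] [PartialOrder T]
    (ξ : P → Q) (hmono : Monotone ξ) :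
    Nat.card {ζ : P → T // Monotone ζ ∧ GPart ζ = GPart ξ} =
    Nat.card {σ : GPart ξ → T //
      ∀ a b : GPart ξ, Prec ξ a b → σ a ≤ σ b ∧ (a ≠ b → σ a < σ b)} :=
  stmt_10_general ξ
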